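/- arXiv:1904.06908 — 2 statements merged into one kernel-verified Lean document; each statement's English description precedes it below -/
import Mathlib

section
/- There exists an absolute constant C₂ > 0 such that for any a, z in the unit disc with ρ(a,z) ≤ 1/2 (where a ≠ 0), one has ∫_{I(a)} (1−|z|²)/|ξ−z|² |dξ| ≥ C₂ · (1−|a|²)(1−|z|²)/|1−conj(a)z|², where I(a) = {ξ ∈ ∂𝔻 : |ξ − a/|a|| ≤ 1−|a|} is the Privalov shadow of a. -/
open Complex

/-- Pseudohyperbolic distance on the unit disc. -/
noncomputable def pd (a z : ℂ) : ℝ :=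
  ‖a - z‖ / ‖1 - (starRingEnd ℂ) a * z‖

/-- The integral of the Poisson kernel at `z` over the Privalov shadow of `a`,
the circle being parametrized by arclength. -/
noncomputable def shadowInt (a z : ℂ) : ℝ :=
  ∫ θ in (0:ℝ)..(2 * Real.pi),
    Set.indicator
      {θ : ℝ | ‖Complex.exp (θ * Complex.I) - a / (‖a‖ : ℂ)‖
        ≤ 1 - ‖a‖}
      (fun θ => (1 - ‖z‖ ^ 2) / ‖Complex.exp (θ * Complex.I) - z‖ ^ 2) θ

/-!
On the shadow `I(a)`, the triangle inequality through `a / |a|` and `a` gives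
`|ξ - z| ≤ 2 (1 - |a|) + |a - z| ≤ (5/2) |1 - ā z|`, because `1 - |a| ≤ |1 - ā z|` and
`ρ(a, z) ≤ 1/2`. So the Poisson kernel is at least `(4/25) (1 - |z|²) / |1 - ā z|²` on `I(a)`.
Since a chord is shorter than its arc, `I(a)` contains a parameter interval of length `1 - |a|`
inside `[0, 2π]`, and `1 - |a|² ≤ 2 (1 - |a|)` gives the constant `2/25`.
-/

open Real Set MeasureTheory

theorem norm_exp_mul_I_sub_exp_mul_I_le (θ s : ℝ) :
    ‖exp (θ * I) - exp (s * I)‖ ≤ |θ - s| := by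
  have h : exp (θ * I) - exp (s * I) = exp (s * I) * (exp (I * ↑(θ - s)) - 1) := by
    rw [mul_sub, ← Complex.exp_add, mul_one]; push_cast; ring_nf
  rw [h, norm_mul, norm_exp_ofReal_mul_I, one_mul, ← Real.norm_eq_abs]
  exact norm_exp_I_mul_ofReal_sub_one_le

theorem exists_Icc_subset_arc {u : ℂ} (hu : ‖u‖ = 1) {r : ℝ} (hr : r ≤ π) :
    ∃ c, 0 ≤ c ∧ c + r ≤ 2 * π ∧ ∀ θ ∈ Icc c (c + r), ‖exp (θ * I) - u‖ ≤ r := by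
  have hu' : exp (arg u * I) = u := by
    simpa [hu] using norm_mul_exp_arg_mul_I u
  have harg₀ := neg_pi_lt_arg u
  have harg₁ := arg_le_pi u
  by_cases h0 : 0 ≤ arg u
  · refine ⟨arg u, h0, by linarith, fun θ hθ => ?_⟩
    rw [← hu']
    refine (norm_exp_mul_I_sub_exp_mul_I_le θ (arg u)).trans ?_
    rw [abs_le]; constructor <;> linarith [hθ.1, hθ.2]
  · have hu'' : exp (↑(arg u + 2 * π) * I) = u := by
      push_cast; rw [add_mul, Complex.exp_add, exp_two_pi_mul_I, mul_one, hu']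
    refine ⟨arg u + 2 * π - r, by linarith, by linarith, fun θ hθ => ?_⟩
    rw [← hu'']
    refine (norm_exp_mul_I_sub_exp_mul_I_le θ _).trans ?_
    rw [abs_le]; constructor <;> linarith [hθ.1, hθ.2]

theorem one_sub_norm_mul_norm_le_norm_one_sub_conj_mul (a z : ℂ) :
    1 - ‖a‖ * ‖z‖ ≤ ‖1 - (starRingEnd ℂ) a * z‖ := by
  simpa [norm_mul] using norm_sub_norm_le (1 : ℂ) ((starRingEnd ℂ) a * z)

theorem norm_div_norm_sub_self {a : ℂ} (ha : a ≠ 0) : ‖a / (‖a‖ : ℂ) - a‖ = |1 - ‖a‖| := by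
  have hA : (‖a‖ : ℂ) ≠ 0 := by simpa using ha
  have h : a / (‖a‖ : ℂ) - a = a / (‖a‖ : ℂ) * ↑(1 - ‖a‖) := by
    field_simp; push_cast; ring
  rw [h, norm_mul, norm_div, norm_real, norm_norm, div_self (norm_ne_zero_iff.mpr ha), one_mul,
    norm_real, Real.norm_eq_abs]

theorem norm_sub_le_of_pd_le {a z : ℂ} {t : ℝ} (h : pd a z ≤ t)
    (hD : 0 < ‖1 - (starRingEnd ℂ) a * z‖) : ‖a - z‖ ≤ t * ‖1 - (starRingEnd ℂ) a * z‖ :=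
  (div_le_iff₀ hD).mp h

theorem norm_sub_le_of_mem_shadow {a z ξ : ℂ} (ha : a ≠ 0) (ha1 : ‖a‖ ≤ 1) (hz1 : ‖z‖ ≤ 1)
    (haz : ‖a - z‖ ≤ 1 / 2 * ‖1 - (starRingEnd ℂ) a * z‖)
    (hξ : ‖ξ - a / (‖a‖ : ℂ)‖ ≤ 1 - ‖a‖) :
    ‖ξ - z‖ ≤ 5 / 2 * ‖1 - (starRingEnd ℂ) a * z‖ := by
  have hu : ‖a / (‖a‖ : ℂ) - a‖ = 1 - ‖a‖ := by
    rw [norm_div_norm_sub_self ha, abs_of_nonneg (by linarith)]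
  have hD : 1 - ‖a‖ ≤ ‖1 - (starRingEnd ℂ) a * z‖ := by
    have h := one_sub_norm_mul_norm_le_norm_one_sub_conj_mul a z
    nlinarith [norm_nonneg a]
  have hξa := norm_sub_le_norm_sub_add_norm_sub ξ (a / (‖a‖ : ℂ)) z
  have hua := norm_sub_le_norm_sub_add_norm_sub (a / (‖a‖ : ℂ)) a z
  linarith

theorem norm_exp_mul_I_sub_pos {z : ℂ} (hz : ‖z‖ < 1) (θ : ℝ) : 0 < ‖exp (θ * I) - z‖ := by
  refine norm_pos_iff.mpr (sub_ne_zero.mpr fun h => ?_)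
  have h1 := norm_exp_ofReal_mul_I θ
  rw [h] at h1
  linarith

theorem continuous_poisson_kernel {z : ℂ} (hz : ‖z‖ < 1) :
    Continuous fun θ : ℝ => (1 - ‖z‖ ^ 2) / ‖exp (θ * I) - z‖ ^ 2 :=
  continuous_const.div (by fun_prop) fun θ => (pow_pos (norm_exp_mul_I_sub_pos hz θ) 2).ne'

theorem mul_sub_le_integral_indicator {f : ℝ → ℝ} {S : Set ℝ} {a b c d m : ℝ}
    (hf : IntervalIntegrable f volume a b) (hS : MeasurableSet S)
    (hf0 : ∀ x ∈ S, 0 ≤ f x) (hac : a ≤ c) (hcd : c ≤ d) (hdb : d ≤ b) (hsub : Icc c d ⊆ S)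
    (hm : ∀ x ∈ Icc c d, m ≤ f x) :
    m * (d - c) ≤ ∫ x in a..b, S.indicator f x := by
  have hfS : IntervalIntegrable (S.indicator f) volume a b :=
    (intervalIntegrable_iff.mp hf).indicator hS |> intervalIntegrable_iff.mpr
  have hfS' : IntervalIntegrable (S.indicator f) volume c d :=
    hfS.mono_set <| by
      rw [uIcc_of_le (hac.trans (hcd.trans hdb)), uIcc_of_le hcd]
      exact Icc_subset_Icc hac hdb
  calc m * (d - c) = ∫ _ in c..d, m := by simp [mul_comm]
    _ ≤ ∫ x in c..d, S.indicator f x := by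
        refine intervalIntegral.integral_mono_on hcd intervalIntegrable_const hfS' fun x hx => ?_
        rw [indicator_of_mem (hsub hx)]
        exact hm x hx
    _ ≤ ∫ x in a..b, S.indicator f x :=
        intervalIntegral.integral_mono_interval hac hcd hdb
          (Filter.Eventually.of_forall fun x => indicator_nonneg hf0 x) hfS

theorem stmt_6 :
    ∃ C₂ : ℝ, 0 < C₂ ∧ ∀ a z : ℂ, a ∈ Metric.ball (0:ℂ) 1 → z ∈ Metric.ball (0:ℂ) 1 →
      a ≠ 0 → pd a z ≤ 1 / 2 →
      C₂ * ((1 - ‖a‖ ^ 2) * (1 - ‖z‖ ^ 2) /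
          ‖1 - (starRingEnd ℂ) a * z‖ ^ 2)
        ≤ shadowInt a z := by
  refine ⟨2 / 25, by norm_num, fun a z ha hz ha0 hpd => ?_⟩
  rw [mem_ball_zero_iff] at ha hz
  set D := ‖1 - (starRingEnd ℂ) a * z‖
  have hD : 0 < D := (one_sub_norm_mul_norm_le_norm_one_sub_conj_mul a z).trans_lt' (by
    nlinarith [norm_nonneg a, norm_nonneg z])
  have hz2 : 0 ≤ 1 - ‖z‖ ^ 2 := by nlinarith [norm_nonneg z]
  have hu : ‖a / (‖a‖ : ℂ)‖ = 1 := by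
    rw [norm_div, norm_real, norm_norm, div_self (norm_ne_zero_iff.mpr ha0)]
  obtain ⟨c, hc0, hc2π, harc⟩ :=
    exists_Icc_subset_arc hu (r := 1 - ‖a‖) (by linarith [pi_gt_three, norm_nonneg a])
  have hkernel : ∀ θ ∈ Icc c (c + (1 - ‖a‖)),
      (1 - ‖z‖ ^ 2) / (5 / 2 * D) ^ 2 ≤ (1 - ‖z‖ ^ 2) / ‖exp (θ * I) - z‖ ^ 2 :=
    fun θ hθ => div_le_div_of_nonneg_left hz2 (pow_pos (norm_exp_mul_I_sub_pos hz θ) 2)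
      (pow_le_pow_left₀ (norm_nonneg _) (norm_sub_le_of_mem_shadow ha0 ha.le hz.le
        (norm_sub_le_of_pd_le hpd hD) (harc θ hθ)) 2)
  have hint := mul_sub_le_integral_indicator ((continuous_poisson_kernel hz).intervalIntegrable _ _)
    (measurableSet_le (by fun_prop) measurable_const : MeasurableSet
      {θ : ℝ | ‖exp (θ * I) - a / (‖a‖ : ℂ)‖ ≤ 1 - ‖a‖}) (fun θ _ => div_nonneg hz2 (by positivity))
    hc0 (by linarith [norm_nonneg a]) hc2π harc hkernel
  rw [add_sub_cancel_left] at hint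
  have hshape : 2 / 25 * ((1 - ‖a‖ ^ 2) * (1 - ‖z‖ ^ 2) / D ^ 2)
      = (1 - ‖z‖ ^ 2) / (5 / 2 * D) ^ 2 * ((1 + ‖a‖) / 2 * (1 - ‖a‖)) := by
    field_simp; ring
  rw [hshape]
  exact (mul_le_mul_of_nonneg_left (mul_le_of_le_one_left (by linarith) (by linarith))
    (div_nonneg hz2 (by positivity))).trans hint
end

section
/- Let Λ be a Blaschke sequence and let A be a sequence of points in the unit disc such that there exist γ ∈ (0,1) and a natural number k with: for each a ∈ A there is λ(a) ∈ Λ with ρ(a, λ(a)) ≤ γ, and #{a ∈ A : λ(a) = λ} ≤ k for every λ ∈ Λ. Then A is a Blaschke sequence, and for every δ > 0 there is a constant C = C(γ, δ, k) > 0 such that for all z ∈ 𝔻: Σ_{a ∈ A, ρ(a,z) > δ} log(|1−conj(a)z|/|a−z|) ≤ C·H_Λ(z). -/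
open Complex

/-- The harmonic function `H_Λ` associated to a Blaschke sequence. -/
noncomputable def HΛ (Λ : ℕ → ℂ) (z : ℂ) : ℝ := ∑' k, shadowInt (Λ k) z

/-
If `ρ(a, λ) ≤ γ`, the Möbius identity `|1 - conj a · b|² = |a - b|² + (1 - |a|²)(1 - |b|²)` makes
`1 - |a|`, `1 - |λ|` and `|1 - conj a · λ|` comparable up to the factor `4 / (1 - γ²)`; hence
`|1 - conj λ · z| ≲ |1 - conj a · z|`, and `1 - ρ(a, z)² = (1 - |a|²)(1 - |z|²) / |1 - conj a · z|²`
is bounded by a multiple of `(1 - |λ|)(1 - |z|²) / |1 - conj λ · z|²`. On the shadow of `λ` the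
Poisson kernel at `z` is at least `(1 - |z|²) / (9 |1 - conj λ · z|²)`, and the shadow contains an
arc of length `2(1 - |λ|)`, so this quantity is at most a multiple of the Poisson integral over the
shadow. Since `log (1 / ρ) ≤ (1 - ρ²) / δ` for `ρ > δ` and every `λ` serves at most `k` points of
`A`, summing gives the bound; the same counting with `1 - |a| ≲ 1 - |λ|` shows `A` is Blaschke.
-/

open ComplexConjugate MeasureTheory Set
open scoped Real Finset

theorem norm_one_sub_conj_mul_sq (a z : ℂ) :
    ‖1 - conj a * z‖ ^ 2 = ‖a - z‖ ^ 2 + (1 - ‖a‖ ^ 2) * (1 - ‖z‖ ^ 2) := by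
  simp only [Complex.sq_norm, Complex.normSq_apply, Complex.sub_re, Complex.sub_im,
    Complex.mul_re, Complex.mul_im, Complex.one_re, Complex.one_im, Complex.conj_re,
    Complex.conj_im]
  ring

theorem norm_one_sub_conj_mul_comm (a b : ℂ) : ‖1 - conj a * b‖ = ‖1 - conj b * a‖ := by
  rw [← Complex.norm_conj]
  simp [mul_comm]

theorem one_sub_norm_le_norm_one_sub_conj_mul (a : ℂ) {z : ℂ} (hz : ‖z‖ ≤ 1) :
    1 - ‖a‖ ≤ ‖1 - conj a * z‖ := by
  have : ‖conj a * z‖ ≤ ‖a‖ := by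
    rw [norm_mul, Complex.norm_conj]
    exact mul_le_of_le_one_right (norm_nonneg a) hz
  linarith [norm_sub_norm_le (1 : ℂ) (conj a * z), norm_one (α := ℂ)]

theorem norm_one_sub_conj_mul_pos {a : ℂ} (ha : ‖a‖ < 1) {z : ℂ} (hz : ‖z‖ ≤ 1) :
    0 < ‖1 - conj a * z‖ :=
  (sub_pos.2 ha).trans_le (one_sub_norm_le_norm_one_sub_conj_mul a hz)

theorem norm_sub_le_norm_one_sub_conj_mul {a z : ℂ} (ha : ‖a‖ ≤ 1) (hz : ‖z‖ ≤ 1) :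
    ‖a - z‖ ≤ ‖1 - conj a * z‖ := by
  have h := norm_one_sub_conj_mul_sq a z
  have : 0 ≤ (1 - ‖a‖ ^ 2) * (1 - ‖z‖ ^ 2) := by
    apply mul_nonneg <;> nlinarith [norm_nonneg a, norm_nonneg z]
  exact (pow_le_pow_iff_left₀ (norm_nonneg _) (norm_nonneg _) two_ne_zero).1 (by linarith)

theorem pd_comm (a b : ℂ) : pd a b = pd b a := by
  rw [pd, pd, norm_sub_rev, norm_one_sub_conj_mul_comm]

theorem pd_nonneg (a z : ℂ) : 0 ≤ pd a z :=
  div_nonneg (norm_nonneg _) (norm_nonneg _)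

theorem one_sub_pd_sq {a z : ℂ} (ha : ‖a‖ < 1) (hz : ‖z‖ ≤ 1) :
    1 - pd a z ^ 2 = (1 - ‖a‖ ^ 2) * (1 - ‖z‖ ^ 2) / ‖1 - conj a * z‖ ^ 2 := by
  have hD := norm_one_sub_conj_mul_pos ha hz
  rw [pd, div_pow, eq_div_iff (by positivity), sub_mul, div_mul_cancel₀ _ (by positivity),
    norm_one_sub_conj_mul_sq]
  ring

theorem pd_le_one {a z : ℂ} (ha : ‖a‖ < 1) (hz : ‖z‖ ≤ 1) : pd a z ≤ 1 :=
  div_le_one_of_le₀ (norm_sub_le_norm_one_sub_conj_mul ha.le hz) (norm_nonneg _)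

theorem one_sub_pd_sq_mul_le {a b : ℂ} (ha : ‖a‖ < 1) (hb : ‖b‖ ≤ 1) :
    (1 - pd a b ^ 2) * ‖1 - conj a * b‖ ≤ 4 * (1 - ‖b‖) := by
  set D := ‖1 - conj a * b‖
  have hD : 0 < D := norm_one_sub_conj_mul_pos ha hb
  have hsq : (1 - pd a b ^ 2) * D ^ 2 = (1 - ‖a‖ ^ 2) * (1 - ‖b‖ ^ 2) := by
    rw [one_sub_pd_sq ha hb, div_mul_cancel₀ _ (by positivity)]
  have haD : 1 - ‖a‖ ^ 2 ≤ 2 * D := by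
    nlinarith [one_sub_norm_le_norm_one_sub_conj_mul a hb, norm_nonneg a]
  have hb2 : 1 - ‖b‖ ^ 2 ≤ 2 * (1 - ‖b‖) := by nlinarith [norm_nonneg b]
  have hb0 : 0 ≤ 1 - ‖b‖ ^ 2 := by nlinarith [norm_nonneg b]
  have : (1 - pd a b ^ 2) * D * D ≤ 4 * (1 - ‖b‖) * D := by
    nlinarith [mul_le_mul haD hb2 hb0 (by positivity)]
  exact le_of_mul_le_mul_right this hD

theorem norm_one_sub_conj_mul_le_of_pd_le {a b : ℂ} {γ : ℝ} (ha : ‖a‖ < 1) (hb : ‖b‖ ≤ 1)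
    (hγ : γ < 1) (h : pd a b ≤ γ) : ‖1 - conj a * b‖ ≤ 4 / (1 - γ ^ 2) * (1 - ‖b‖) := by
  have hpd := pd_nonneg a b
  have hγ' : 0 < 1 - γ ^ 2 := by nlinarith
  rw [div_mul_eq_mul_div, le_div_iff₀ hγ', mul_comm]
  calc (1 - γ ^ 2) * ‖1 - conj a * b‖ ≤ (1 - pd a b ^ 2) * ‖1 - conj a * b‖ := by
        gcongr
    _ ≤ 4 * (1 - ‖b‖) := one_sub_pd_sq_mul_le ha hb

theorem one_sub_norm_le_of_pd_le {a b : ℂ} {γ : ℝ} (ha : ‖a‖ < 1) (hb : ‖b‖ ≤ 1)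
    (hγ : γ < 1) (h : pd a b ≤ γ) : 1 - ‖a‖ ≤ 4 / (1 - γ ^ 2) * (1 - ‖b‖) :=
  (one_sub_norm_le_norm_one_sub_conj_mul a hb).trans
    (norm_one_sub_conj_mul_le_of_pd_le ha hb hγ h)

theorem norm_one_sub_conj_mul_le_mul_of_pd_le {a b z : ℂ} {γ : ℝ} (ha : ‖a‖ < 1) (hb : ‖b‖ < 1)
    (hz : ‖z‖ ≤ 1) (hγ : γ < 1) (h : pd a b ≤ γ) :
    ‖1 - conj b * z‖ ≤ (1 + 4 / (1 - γ ^ 2)) * ‖1 - conj a * z‖ := by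
  have hab : ‖a - b‖ ≤ 4 / (1 - γ ^ 2) * ‖1 - conj a * z‖ := calc
    ‖a - b‖ = ‖b - a‖ := norm_sub_rev a b
    _ ≤ ‖1 - conj b * a‖ := norm_sub_le_norm_one_sub_conj_mul hb.le ha.le
    _ ≤ 4 / (1 - γ ^ 2) * (1 - ‖a‖) :=
      norm_one_sub_conj_mul_le_of_pd_le hb ha.le hγ (pd_comm a b ▸ h)
    _ ≤ 4 / (1 - γ ^ 2) * ‖1 - conj a * z‖ := by
      have : 0 < 1 - γ ^ 2 := by nlinarith [pd_nonneg a b]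
      gcongr
      exact one_sub_norm_le_norm_one_sub_conj_mul a hz
  calc ‖1 - conj b * z‖ = ‖(1 - conj a * z) + conj (a - b) * z‖ := by
        rw [map_sub]; ring_nf
    _ ≤ ‖1 - conj a * z‖ + ‖a - b‖ := by
      refine (norm_add_le _ _).trans (add_le_add le_rfl ?_)
      rw [norm_mul, Complex.norm_conj]
      exact mul_le_of_le_one_right (norm_nonneg _) hz
    _ ≤ (1 + 4 / (1 - γ ^ 2)) * ‖1 - conj a * z‖ := by linarith

def shadow (a : ℂ) : Set ℝ := {θ | ‖exp (θ * I) - a / (‖a‖ : ℂ)‖ ≤ 1 - ‖a‖}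

theorem measurableSet_shadow (a : ℂ) : MeasurableSet (shadow a) :=
  (isClosed_le (by fun_prop) continuous_const).measurableSet

theorem one_sub_norm_le_norm_exp_sub (z : ℂ) (θ : ℝ) : 1 - ‖z‖ ≤ ‖exp (θ * I) - z‖ := by
  simpa using norm_sub_norm_le (exp (θ * I)) z

theorem poissonKernel_exp_nonneg {z : ℂ} (hz : ‖z‖ ≤ 1) (θ : ℝ) :
    0 ≤ poissonKernel 0 z (exp (θ * I)) := by
  rw [poissonKernel_def]
  exact div_nonneg (by simpa using hz) (sq_nonneg _)

theorem poissonKernel_exp_le {z : ℂ} (hz : ‖z‖ < 1) (θ : ℝ) :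
    poissonKernel 0 z (exp (θ * I)) ≤ (1 + ‖z‖) / (1 - ‖z‖) := by
  have := re_herglotzRieszKernel_le (c := 0) (R := 1) (w := z) (z := exp (θ * I))
    (by simp) (by simpa using hz)
  rw [poissonKernel_eq_re_herglotzRieszKernel]
  simpa [herglotzRieszKernel] using this

theorem continuous_poissonKernel_exp {z : ℂ} (hz : ‖z‖ < 1) :
    Continuous fun θ : ℝ ↦ poissonKernel 0 z (exp (θ * I)) := by
  simp_rw [poissonKernel_def]
  refine Continuous.div (by fun_prop) (by fun_prop) fun θ ↦ ?_
  simp only [sub_zero]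
  exact pow_ne_zero 2 ((sub_pos.2 hz).trans_le (one_sub_norm_le_norm_exp_sub z θ)).ne'

theorem shadowInt_eq_setIntegral (a z : ℂ) (t : ℝ) :
    shadowInt a z = ∫ θ in Ioc (t - π) (t + π) ∩ shadow a, poissonKernel 0 z (exp (θ * I)) := by
  set f := (shadow a).indicator fun θ : ℝ ↦ poissonKernel 0 z (exp (θ * I))
  have hf : Function.Periodic f (2 * π) := fun θ ↦ by
    simp only [f, shadow, indicator, mem_ofPred_eq, ofReal_add, ofReal_mul, ofReal_ofNat,
      exp_mul_I_periodic θ]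
  calc shadowInt a z = ∫ θ in (0 : ℝ)..0 + 2 * π, f θ := by
        simp [shadowInt, f, shadow, poissonKernel_def]
    _ = ∫ θ in (t - π)..(t - π) + 2 * π, f θ := hf.intervalIntegral_add_eq 0 (t - π)
    _ = ∫ θ in Ioc (t - π) (t + π), f θ := by
      rw [intervalIntegral.integral_of_le (by linarith [Real.pi_pos])]
      ring_nf
    _ = _ := setIntegral_indicator (measurableSet_shadow a)

theorem exp_arg_mul_I {a : ℂ} (ha : a ≠ 0) : exp (arg a * I) = a / ‖a‖ := by
  rw [eq_div_iff (by exact_mod_cast norm_ne_zero_iff.2 ha), mul_comm]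
  exact norm_mul_exp_arg_mul_I a

theorem norm_exp_mul_I_sub_exp_mul_I (θ t : ℝ) :
    ‖exp (θ * I) - exp (t * I)‖ = ‖exp (I * ↑(θ - t)) - 1‖ := by
  have : exp (θ * I) - exp (t * I) = exp (t * I) * (exp (I * ↑(θ - t)) - 1) := by
    rw [mul_sub, ← exp_add, mul_one]
    push_cast
    ring_nf
  rw [this, norm_mul, norm_exp_ofReal_mul_I, one_mul]

theorem Icc_subset_shadow {a : ℂ} (ha : a ≠ 0) :
    Icc (arg a - (1 - ‖a‖)) (arg a + (1 - ‖a‖)) ⊆ shadow a := by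
  intro θ hθ
  have : |θ - arg a| ≤ 1 - ‖a‖ := abs_sub_le_iff.2 ⟨by linarith [hθ.2], by linarith [hθ.1]⟩
  change ‖exp (θ * I) - a / (‖a‖ : ℂ)‖ ≤ 1 - ‖a‖
  rw [← exp_arg_mul_I ha, norm_exp_mul_I_sub_exp_mul_I]
  exact Real.norm_exp_I_mul_ofReal_sub_one_le.trans (by rwa [Real.norm_eq_abs])

theorem Ioc_inter_shadow_subset {a : ℂ} (ha : a ≠ 0) :
    Ioc (arg a - π) (arg a + π) ∩ shadow a ⊆
      Icc (arg a - 2 * (1 - ‖a‖)) (arg a + 2 * (1 - ‖a‖)) := by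
  rintro θ ⟨hθ, hθa⟩
  set x := θ - arg a
  have hx : |x / 2| ≤ π / 2 := by
    rw [abs_div, abs_two]
    gcongr
    exact abs_sub_le_iff.2 ⟨by linarith [hθ.2], by linarith [hθ.1]⟩
  have hchord : ‖2 * Real.sin (x / 2)‖ ≤ 1 - ‖a‖ := by
    have : ‖exp (θ * I) - a / ‖a‖‖ ≤ 1 - ‖a‖ := hθa
    rwa [← exp_arg_mul_I ha, norm_exp_mul_I_sub_exp_mul_I, norm_exp_I_mul_ofReal_sub_one] at this
  -- Jordan's inequality `2 / π * |y| ≤ |sin y|` on `|y| ≤ π / 2` inverts the chord length.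
  have hJordan := Real.mul_abs_le_abs_sin hx
  rw [norm_mul, Real.norm_eq_abs, Real.norm_eq_abs, abs_two] at hchord
  rw [abs_div, abs_two] at hJordan
  have hx' : |x| ≤ π * ((1 - ‖a‖) / 2) := by
    rw [← div_le_iff₀' Real.pi_pos]
    calc |x| / π = 2 / π * (|x| / 2) := by field_simp
      _ ≤ (1 - ‖a‖) / 2 := by linarith
  have : |x| ≤ 2 * (1 - ‖a‖) := by
    nlinarith [Real.pi_le_four, abs_nonneg (Real.sin (x / 2))]
  exact ⟨by linarith [(abs_le.1 this).1], by linarith [(abs_le.1 this).2]⟩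

theorem norm_div_norm_sub_self_le (a : ℂ) (ha : ‖a‖ ≤ 1) : ‖a / ‖a‖ - a‖ ≤ 1 - ‖a‖ := by
  have : a / ‖a‖ - a = a / ‖a‖ * (1 - ‖a‖ : ℝ) := by
    rcases eq_or_ne a 0 with rfl | ha0
    · simp
    · field_simp [norm_ne_zero_iff.2 ha0]
      push_cast; ring
  rw [this, norm_mul, Complex.norm_real, Real.norm_of_nonneg (by linarith), norm_div,
    Complex.norm_real, norm_norm]
  exact mul_le_of_le_one_left (by linarith) (div_self_le_one _)

theorem norm_exp_sub_le_of_mem_shadow {a z : ℂ} {θ : ℝ} (ha : ‖a‖ ≤ 1) (hz : ‖z‖ ≤ 1)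
    (hθ : θ ∈ shadow a) : ‖exp (θ * I) - z‖ ≤ 3 * ‖1 - conj a * z‖ := by
  have hθ : ‖exp (θ * I) - a / ‖a‖‖ ≤ 1 - ‖a‖ := hθ
  have hD := one_sub_norm_le_norm_one_sub_conj_mul a hz
  calc ‖exp (θ * I) - z‖
      ≤ ‖exp (θ * I) - a / ‖a‖‖ + ‖a / ‖a‖ - a‖ + ‖a - z‖ := by
        linarith [norm_sub_le_norm_sub_add_norm_sub (exp (θ * I)) (a / ‖a‖) z,
          norm_sub_le_norm_sub_add_norm_sub (a / ‖a‖) a z]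
    _ ≤ (1 - ‖a‖) + (1 - ‖a‖) + ‖1 - conj a * z‖ := by
      gcongr
      · exact norm_div_norm_sub_self_le a ha
      · exact norm_sub_le_norm_one_sub_conj_mul ha hz
    _ ≤ 3 * ‖1 - conj a * z‖ := by linarith

theorem le_poissonKernel_exp_of_mem_shadow {a z : ℂ} {θ : ℝ} (ha : ‖a‖ ≤ 1) (hz : ‖z‖ < 1)
    (hθ : θ ∈ shadow a) :
    (1 - ‖z‖ ^ 2) / (9 * ‖1 - conj a * z‖ ^ 2) ≤ poissonKernel 0 z (exp (θ * I)) := by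
  have h0 : 0 < ‖exp (θ * I) - z‖ := (sub_pos.2 hz).trans_le (one_sub_norm_le_norm_exp_sub z θ)
  have h3 := norm_exp_sub_le_of_mem_shadow ha hz.le hθ
  rw [poissonKernel_def, sub_zero, sub_zero, norm_exp_ofReal_mul_I, one_pow]
  gcongr
  · nlinarith [norm_nonneg z]
  · nlinarith

theorem shadowInt_nonneg (a : ℂ) {z : ℂ} (hz : ‖z‖ ≤ 1) : 0 ≤ shadowInt a z := by
  rw [shadowInt_eq_setIntegral a z 0]
  exact integral_nonneg fun θ ↦ poissonKernel_exp_nonneg hz θ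

theorem le_shadowInt {a z : ℂ} (ha0 : a ≠ 0) (ha : ‖a‖ ≤ 1) (hz : ‖z‖ < 1) :
    2 * (1 - ‖a‖) * (1 - ‖z‖ ^ 2) / (9 * ‖1 - conj a * z‖ ^ 2) ≤ shadowInt a z := by
  set J := Icc (arg a - (1 - ‖a‖)) (arg a + (1 - ‖a‖))
  have hJ : J ⊆ Ioc (arg a - π) (arg a + π) ∩ shadow a := fun θ hθ ↦
    ⟨⟨by linarith [hθ.1, Real.pi_gt_three, norm_nonneg a],
      by linarith [hθ.2, Real.pi_gt_three, norm_nonneg a]⟩, Icc_subset_shadow ha0 hθ⟩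
  have hint : IntegrableOn (fun θ : ℝ ↦ poissonKernel 0 z (exp (θ * I)))
      (Ioc (arg a - π) (arg a + π) ∩ shadow a) :=
    (continuous_poissonKernel_exp hz).integrableOn_Ioc.mono_set inter_subset_left
  rw [shadowInt_eq_setIntegral a z (arg a)]
  calc 2 * (1 - ‖a‖) * (1 - ‖z‖ ^ 2) / (9 * ‖1 - conj a * z‖ ^ 2)
      = (1 - ‖z‖ ^ 2) / (9 * ‖1 - conj a * z‖ ^ 2) * volume.real J := by
        rw [Real.volume_real_Icc_of_le (by linarith)]
        ring
    _ ≤ ∫ θ in J, poissonKernel 0 z (exp (θ * I)) :=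
        setIntegral_ge_of_const_le_real measurableSet_Icc measure_Icc_lt_top.ne
          (fun θ hθ ↦ le_poissonKernel_exp_of_mem_shadow ha hz (hJ hθ).2) (hint.mono_set hJ)
    _ ≤ _ := setIntegral_mono_set hint
        (ae_of_all _ fun θ ↦ poissonKernel_exp_nonneg hz.le θ) hJ.eventuallyLE

theorem shadowInt_le {a z : ℂ} (ha0 : a ≠ 0) (ha : ‖a‖ ≤ 1) (hz : ‖z‖ < 1) :
    shadowInt a z ≤ 4 * (1 - ‖a‖) * ((1 + ‖z‖) / (1 - ‖z‖)) := by
  set S := Ioc (arg a - π) (arg a + π) ∩ shadow a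
  rw [shadowInt_eq_setIntegral a z (arg a)]
  calc ∫ θ in S, poissonKernel 0 z (exp (θ * I))
      ≤ ‖∫ θ in S, poissonKernel 0 z (exp (θ * I))‖ := Real.le_norm_self _
    _ ≤ (1 + ‖z‖) / (1 - ‖z‖) * volume.real S :=
        norm_setIntegral_le_of_norm_le_const
          ((measure_mono inter_subset_left).trans_lt measure_Ioc_lt_top) fun θ _ ↦ by
            rw [Real.norm_of_nonneg (poissonKernel_exp_nonneg hz.le θ)]
            exact poissonKernel_exp_le hz θ
    _ ≤ (1 + ‖z‖) / (1 - ‖z‖) *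
          volume.real (Icc (arg a - 2 * (1 - ‖a‖)) (arg a + 2 * (1 - ‖a‖))) := by
        have : 0 < 1 - ‖z‖ := by linarith
        gcongr
        exacts [measure_Icc_lt_top.ne, Ioc_inter_shadow_subset ha0]
    _ = 4 * (1 - ‖a‖) * ((1 + ‖z‖) / (1 - ‖z‖)) := by
        rw [Real.volume_real_Icc_of_le (by linarith)]
        ring

theorem summable_and_tsum_le_of_le_comp {ι κ : Type*} {f : ι → ℝ} {g : κ → ℝ} {l : ι → κ}
    {k : ℕ} (hl : ∀ m, {n | l n = m}.Finite ∧ {n | l n = m}.ncard ≤ k)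
    (hf : 0 ≤ f) (hg : 0 ≤ g) (hfg : ∀ n, f n ≤ g (l n)) (hgs : Summable g) :
    Summable f ∧ ∑' n, f n ≤ k * ∑' m, g m := by
  classical
  have hsum : ∀ u : Finset ι, ∑ n ∈ u, f n ≤ k * ∑' m, g m := fun u ↦ calc
    ∑ n ∈ u, f n ≤ ∑ n ∈ u, g (l n) := Finset.sum_le_sum fun n _ ↦ hfg n
    _ = ∑ m ∈ u.image l, #{n ∈ u | l n = m} • g m := Finset.sum_comp g l
    _ ≤ ∑ m ∈ u.image l, k * g m := Finset.sum_le_sum fun m _ ↦ by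
      rw [nsmul_eq_mul]
      refine mul_le_mul_of_nonneg_right ?_ (hg m)
      have hcard : #{n ∈ u | l n = m} ≤ k := by
        rw [← Set.ncard_coe_finset]
        refine le_trans (Set.ncard_le_ncard ?_ (hl m).1) (hl m).2
        intro n hn
        exact (Finset.mem_filter.1 hn).2
      exact_mod_cast hcard
    _ ≤ k * ∑' m, g m := by
      rw [← Finset.mul_sum]
      exact mul_le_mul_of_nonneg_left (hgs.sum_le_tsum _ fun m _ ↦ hg m) k.cast_nonneg
  exact ⟨summable_of_sum_le hf hsum, Real.tsum_le_of_sum_le hf hsum⟩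

theorem summable_shadowInt {Λ : ℕ → ℂ} (hΛ : ∀ n, Λ n ≠ 0 ∧ ‖Λ n‖ ≤ 1)
    (hΛB : Summable fun n ↦ 1 - ‖Λ n‖) {z : ℂ} (hz : ‖z‖ < 1) :
    Summable fun n ↦ shadowInt (Λ n) z :=
  .of_nonneg_of_le (fun _ ↦ shadowInt_nonneg _ hz.le)
    (fun n ↦ shadowInt_le (hΛ n).1 (hΛ n).2 hz) ((hΛB.mul_left 4).mul_right _)

theorem log_one_div_le {δ ρ : ℝ} (hδ : 0 < δ) (hδρ : δ < ρ) (hρ : ρ ≤ 1) :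
    Real.log (1 / ρ) ≤ (1 - ρ ^ 2) / δ := by
  have hρ0 : 0 < ρ := hδ.trans hδρ
  calc Real.log (1 / ρ) ≤ 1 / ρ - 1 := Real.log_le_sub_one_of_pos (by positivity)
    _ = (1 - ρ) / ρ := by field_simp
    _ ≤ (1 - ρ) / δ := div_le_div_of_nonneg_left (by linarith) hδ hδρ.le
    _ ≤ (1 - ρ ^ 2) / δ := by gcongr; nlinarith

theorem one_sub_pd_sq_le_of_pd_le {a b z : ℂ} {γ : ℝ} (ha : ‖a‖ < 1) (hb : ‖b‖ < 1)
    (hz : ‖z‖ ≤ 1) (hγ : γ < 1) (hab : pd a b ≤ γ) :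
    1 - pd a z ^ 2 ≤ 2 * (4 / (1 - γ ^ 2)) * (1 + 4 / (1 - γ ^ 2)) ^ 2 *
      ((1 - ‖b‖) * (1 - ‖z‖ ^ 2) / ‖1 - conj b * z‖ ^ 2) := by
  set c := 4 / (1 - γ ^ 2)
  have hc : 0 < c := by
    have := pd_nonneg a b
    have : 0 < 1 - γ ^ 2 := by nlinarith
    positivity
  have hDa := norm_one_sub_conj_mul_pos ha hz
  have hDb := norm_one_sub_conj_mul_pos hb hz
  have ha2 : 1 - ‖a‖ ^ 2 ≤ 2 * c * (1 - ‖b‖) := by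
    nlinarith [one_sub_norm_le_of_pd_le ha hb.le hγ hab, norm_nonneg a]
  have hD2 : ‖1 - conj b * z‖ ^ 2 ≤ (1 + c) ^ 2 * ‖1 - conj a * z‖ ^ 2 := by
    rw [← mul_pow]
    exact pow_le_pow_left₀ hDb.le (norm_one_sub_conj_mul_le_mul_of_pd_le ha hb hz hγ hab) 2
  have hz2 : 0 ≤ 1 - ‖z‖ ^ 2 := by nlinarith [norm_nonneg z]
  rw [one_sub_pd_sq ha hz, mul_div_assoc', div_le_div_iff₀ (by positivity) (by positivity)]
  calc (1 - ‖a‖ ^ 2) * (1 - ‖z‖ ^ 2) * ‖1 - conj b * z‖ ^ 2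
      ≤ (2 * c * (1 - ‖b‖)) * (1 - ‖z‖ ^ 2) * ((1 + c) ^ 2 * ‖1 - conj a * z‖ ^ 2) := by
        gcongr
    _ = 2 * c * (1 + c) ^ 2 * ((1 - ‖b‖) * (1 - ‖z‖ ^ 2)) * ‖1 - conj a * z‖ ^ 2 := by ring

theorem log_one_div_pd_le {a b z : ℂ} {γ δ : ℝ} (ha : ‖a‖ < 1) (hb0 : b ≠ 0) (hb : ‖b‖ < 1)
    (hz : ‖z‖ < 1) (hγ : γ < 1) (hab : pd a b ≤ γ) (hδ : 0 < δ) (hδz : δ < pd a z) :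
    Real.log (1 / pd a z) ≤
      9 * (4 / (1 - γ ^ 2)) * (1 + 4 / (1 - γ ^ 2)) ^ 2 / δ * shadowInt b z := by
  have hγ' : 0 < 1 - γ ^ 2 := by nlinarith [pd_nonneg a b]
  calc Real.log (1 / pd a z) ≤ (1 - pd a z ^ 2) / δ := log_one_div_le hδ hδz (pd_le_one ha hz.le)
    _ ≤ 2 * (4 / (1 - γ ^ 2)) * (1 + 4 / (1 - γ ^ 2)) ^ 2 *
          ((1 - ‖b‖) * (1 - ‖z‖ ^ 2) / ‖1 - conj b * z‖ ^ 2) / δ := by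
        gcongr
        exact one_sub_pd_sq_le_of_pd_le ha hb hz.le hγ hab
    _ = 9 * (4 / (1 - γ ^ 2)) * (1 + 4 / (1 - γ ^ 2)) ^ 2 / δ *
          (2 * (1 - ‖b‖) * (1 - ‖z‖ ^ 2) / (9 * ‖1 - conj b * z‖ ^ 2)) := by
        field_simp
    _ ≤ 9 * (4 / (1 - γ ^ 2)) * (1 + 4 / (1 - γ ^ 2)) ^ 2 / δ * shadowInt b z := by
        gcongr
        exact le_shadowInt hb0 hb.le hz

/-- Lemma 2.2 of the paper. -/
theorem stmt_7 (Λ A : ℕ → ℂ) (l : ℕ → ℕ) (γ : ℝ) (k : ℕ)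
    (hΛd : ∀ n, Λ n ∈ Metric.ball (0:ℂ) 1 ∧ Λ n ≠ 0)
    (hΛB : Summable fun n => 1 - ‖Λ n‖)
    (hAd : ∀ n, A n ∈ Metric.ball (0:ℂ) 1)
    (hγ0 : 0 < γ) (hγ1 : γ < 1)
    (hclose : ∀ n, pd (A n) (Λ (l n)) ≤ γ)
    (hmult : ∀ m, {n | l n = m}.Finite ∧ {n | l n = m}.ncard ≤ k) :
    (Summable fun n => 1 - ‖A n‖) ∧
      ∀ δ : ℝ, 0 < δ → ∃ C : ℝ, 0 < C ∧ ∀ z ∈ Metric.ball (0:ℂ) 1,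
        (Summable fun n =>
          if δ < pd (A n) z then Real.log (1 / pd (A n) z) else 0) ∧
        (∑' n, if δ < pd (A n) z then Real.log (1 / pd (A n) z) else 0)
          ≤ C * HΛ Λ z := by
  simp only [mem_ball_zero_iff] at hΛd hAd
  have hγ : 0 < 1 - γ ^ 2 := by nlinarith
  have hA := summable_and_tsum_le_of_le_comp (g := fun m ↦ 4 / (1 - γ ^ 2) * (1 - ‖Λ m‖)) hmult
    (fun n ↦ sub_nonneg.2 (hAd n).le)
    (fun m ↦ mul_nonneg (by positivity) (sub_nonneg.2 (hΛd m).1.le))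
    (fun n ↦ one_sub_norm_le_of_pd_le (hAd n) (hΛd _).1.le hγ1 (hclose n)) (hΛB.mul_left _)
  refine ⟨hA.1, fun δ hδ ↦ ?_⟩
  set K := 9 * (4 / (1 - γ ^ 2)) * (1 + 4 / (1 - γ ^ 2)) ^ 2 / δ
  have hK : 0 < K := by positivity
  refine ⟨K * (k + 1), by positivity, fun z hz ↦ ?_⟩
  rw [mem_ball_zero_iff] at hz
  have hterm : ∀ n, 0 ≤ if δ < pd (A n) z then Real.log (1 / pd (A n) z) else 0 := fun n ↦ by
    split_ifs with h
    · exact Real.log_nonneg (one_le_one_div (hδ.trans h) (pd_le_one (hAd n) hz.le))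
    · exact le_rfl
  obtain ⟨hsum, hle⟩ := summable_and_tsum_le_of_le_comp (g := fun m ↦ K * shadowInt (Λ m) z)
    hmult hterm (fun m ↦ mul_nonneg hK.le (shadowInt_nonneg _ hz.le)) (fun n ↦ by
      split_ifs with h
      · exact log_one_div_pd_le (hAd n) (hΛd _).2 (hΛd _).1 hz hγ1 (hclose n) hδ h
      · exact mul_nonneg hK.le (shadowInt_nonneg _ hz.le))
    ((summable_shadowInt (fun m ↦ ⟨(hΛd m).2, (hΛd m).1.le⟩) hΛB hz).mul_left K)
  refine ⟨hsum, hle.trans ?_⟩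
  rw [tsum_mul_left, HΛ]
  have : 0 ≤ ∑' m, shadowInt (Λ m) z := tsum_nonneg fun m ↦ shadowInt_nonneg _ hz.le
  nlinarith
end
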